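/- arXiv:2107.04405 — 3 statements merged into one kernel-verified Lean document; each statement's English description precedes it below -/
import Mathlib

section
/- Let a : ℝ → ℝ be positive and twice differentiable with a'' never zero, and suppose (a·a'' − (a')²)/(a³·a'') = −1/ε for a nonzero constant ε. Then the function t ↦ (a'(t)²/a(t)²)·(ε + a(t)²) is constant. -/
/-! Writing `H = (a')² (ε + a²) / a²`, one computes
`H' = (2 a' / a³) · (ε (a a'' - (a')²) + a³ a'')`, and the ODE says exactly that the second factor
vanishes. Hence `H' = 0` and `H` is constant. -/

lemma mul_eq_neg_and_ne_zero_of_div_eq_neg_one_div {x y ε : ℝ} (hε : ε ≠ 0)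
    (h : x / y = -1 / ε) : ε * x = -y ∧ y ≠ 0 := by
  -- `x / 0 = 0 ≠ -1 / ε`, so the denominator cannot vanish.
  have hy : y ≠ 0 := (div_ne_zero_iff.mp (h ▸ div_ne_zero (by norm_num) hε)).2
  refine ⟨?_, hy⟩
  rw [div_eq_div_iff hy hε] at h
  linarith

lemma hasDerivAt_sq_div_sq_mul_const_add_sq {p q : ℝ → ℝ} {p' q' t : ℝ} (ε : ℝ)
    (hp : HasDerivAt p p' t) (hq : HasDerivAt q q' t) (hpt : p t ≠ 0) :
    HasDerivAt (fun s => q s ^ 2 / p s ^ 2 * (ε + p s ^ 2))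
      (2 * q t / p t ^ 3 * (ε * (p t * q' - q t * p') + p t ^ 3 * q')) t := by
  have hp2 := hp.fun_pow 2
  have hquot := (hq.fun_pow 2).fun_div hp2 (pow_ne_zero 2 hpt)
  refine (hquot.fun_mul (hp2.const_add ε)).congr_deriv ?_
  field_simp
  ring

theorem stmt_2_general (a : ℝ → ℝ) (ε : ℝ) (hε : ε ≠ 0)
    (hd1 : Differentiable ℝ a)
    (hd2 : Differentiable ℝ (deriv a))
    (hode : ∀ t, (a t * deriv (deriv a) t - (deriv a t) ^ 2) /
      ((a t) ^ 3 * deriv (deriv a) t) = - 1 / ε) :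
    ∃ ψ : ℝ, ∀ t, (deriv a t) ^ 2 / (a t) ^ 2 * (ε + (a t) ^ 2) = ψ := by
  set H : ℝ → ℝ := fun t => (deriv a t) ^ 2 / (a t) ^ 2 * (ε + (a t) ^ 2)
  have hH : ∀ t, HasDerivAt H 0 t := by
    intro t
    obtain ⟨hode', hden⟩ := mul_eq_neg_and_ne_zero_of_div_eq_neg_one_div hε (hode t)
    have hat : a t ≠ 0 := pow_ne_zero_iff (n := 3) (by norm_num) |>.mp (left_ne_zero_of_mul hden)
    convert hasDerivAt_sq_div_sq_mul_const_add_sq ε (hd1 t).hasDerivAt (hd2 t).hasDerivAt hat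
      using 1
    rw [← sq, hode', neg_add_cancel, mul_zero]
  exact ⟨H 0, fun t => is_const_of_deriv_eq_zero (fun x => (hH x).differentiableAt)
    (fun x => (hH x).deriv) t 0⟩

theorem stmt_2 (a : ℝ → ℝ) (ε : ℝ) (hε : ε ≠ 0)
    (ha : ∀ t, 0 < a t)
    (hd1 : Differentiable ℝ a)
    (hd2 : Differentiable ℝ (deriv a))
    (ha'' : ∀ t, deriv (deriv a) t ≠ 0)
    (hode : ∀ t, (a t * deriv (deriv a) t - (deriv a t) ^ 2) /
      ((a t) ^ 3 * deriv (deriv a) t) = - 1 / ε) :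
    ∃ ψ : ℝ, ∀ t, (deriv a t) ^ 2 / (a t) ^ 2 * (ε + (a t) ^ 2) = ψ :=
  stmt_2_general a ε hε hd1 hd2 hode
end

section
/- Let ε₀ > 0 and let a : I → ℝ be a differentiable function on an interval I with 0 < a(t) < ε₀ satisfying (a'(t)/a(t))·√(ε₀² − a(t)²) = ε₁ for a constant ε₁. Then there exists a constant ε₂ such that √(ε₀² − a(t)²) − ε₀·ln(ε₀ + √(ε₀² − a(t)²)) + ε₀·ln a(t) = ε₁ t + ε₂ for all t ∈ I. -/
/-! The left-hand side is `F (a t)` for a primitive `F` of `√(ε₀² - x²) / x` on `(0, ε₀)`, so by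
the chain rule and the ODE it has derivative `ε₁` on the convex set `I`, hence equals
`ε₁ t + ε₂` there by the mean value inequality. -/

open Real

noncomputable def scaleFactorPrimitive (c x : ℝ) : ℝ :=
  √(c ^ 2 - x ^ 2) - c * log (c + √(c ^ 2 - x ^ 2)) + c * log x

/-- With `s = √(c² - x²)` the three terms contribute `-x/s`, `c x / (s (c + s))` and `c/x`,
which add up to `s/x` because `c² - x² = s²`. -/
theorem hasDerivAt_scaleFactorPrimitive {c x : ℝ} (hx : 0 < x) (hxc : x < c) :
    HasDerivAt (scaleFactorPrimitive c) (√(c ^ 2 - x ^ 2) / x) x := by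
  have hc : 0 < c := hx.trans hxc
  have hrad : 0 < c ^ 2 - x ^ 2 := by nlinarith
  set s := √(c ^ 2 - x ^ 2)
  have hs_pos : 0 < s := sqrt_pos.mpr hrad
  have hs_sq : s ^ 2 = c ^ 2 - x ^ 2 := sq_sqrt hrad.le
  have hrad' : HasDerivAt (fun y => c ^ 2 - y ^ 2) (-(2 * x)) x := by
    simpa using ((hasDerivAt_id x).pow 2).const_sub (c ^ 2)
  have hsqrt : HasDerivAt (fun y => √(c ^ 2 - y ^ 2)) (-(2 * x) / (2 * s)) x :=
    hrad'.sqrt hrad.ne'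
  have hlog : HasDerivAt (fun y => log (c + √(c ^ 2 - y ^ 2))) (-(2 * x) / (2 * s) / (c + s)) x :=
    (hsqrt.const_add c).log (by positivity)
  refine ((hsqrt.sub (hlog.const_mul c)).add ((hasDerivAt_log hx.ne').const_mul c)).congr_deriv ?_
  field_simp
  linear_combination (-s) * hs_sq

theorem Convex.exists_forall_eq_mul_add_of_hasDerivAt {I : Set ℝ} (hI : Convex ℝ I)
    {f : ℝ → ℝ} {c : ℝ} (hf : ∀ t ∈ I, HasDerivAt f c t) :
    ∃ k, ∀ t ∈ I, f t = c * t + k := by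
  rcases I.eq_empty_or_nonempty with rfl | ⟨t₀, ht₀⟩
  · exact ⟨0, by simp⟩
  refine ⟨f t₀ - c * t₀, fun t ht => ?_⟩
  have hg : ∀ u ∈ I, HasDerivWithinAt (fun u => f u - c * u) 0 I u := fun u hu =>
    (((hf u hu).sub ((hasDerivAt_id u).const_mul c)).congr_deriv (by ring)).hasDerivWithinAt
  have hle := hI.norm_image_sub_le_of_norm_hasDerivWithin_le hg (fun _ _ => norm_zero.le) ht₀ ht
  rw [zero_mul, norm_le_zero_iff, sub_eq_zero] at hle
  linarith

theorem stmt_5_general (I : Set ℝ) (hI : Convex ℝ I) (a : ℝ → ℝ) (ε₀ ε₁ : ℝ)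
    (ha : ∀ t ∈ I, 0 < a t ∧ a t < ε₀)
    (hd : ∀ t ∈ I, DifferentiableAt ℝ a t)
    (hode : ∀ t ∈ I, deriv a t / a t * Real.sqrt (ε₀ ^ 2 - (a t) ^ 2) = ε₁) :
    ∃ ε₂ : ℝ, ∀ t ∈ I,
      Real.sqrt (ε₀ ^ 2 - (a t) ^ 2)
        - ε₀ * Real.log (ε₀ + Real.sqrt (ε₀ ^ 2 - (a t) ^ 2))
        + ε₀ * Real.log (a t) = ε₁ * t + ε₂ := by
  refine hI.exists_forall_eq_mul_add_of_hasDerivAt (f := scaleFactorPrimitive ε₀ ∘ a)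
    fun t ht => ?_
  have hcomp := (hasDerivAt_scaleFactorPrimitive (ha t ht).1 (ha t ht).2).comp t
    (hd t ht).hasDerivAt
  exact hcomp.congr_deriv (by rw [← hode t ht]; ring)

theorem stmt_5 (I : Set ℝ) (hI : Convex ℝ I) (a : ℝ → ℝ) (ε₀ ε₁ : ℝ)
    (hε₀ : 0 < ε₀)
    (ha : ∀ t ∈ I, 0 < a t ∧ a t < ε₀)
    (hd : ∀ t ∈ I, DifferentiableAt ℝ a t)
    (hode : ∀ t ∈ I, deriv a t / a t * Real.sqrt (ε₀ ^ 2 - (a t) ^ 2) = ε₁) :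
    ∃ ε₂ : ℝ, ∀ t ∈ I,
      Real.sqrt (ε₀ ^ 2 - (a t) ^ 2)
        - ε₀ * Real.log (ε₀ + Real.sqrt (ε₀ ^ 2 - (a t) ^ 2))
        + ε₀ * Real.log (a t) = ε₁ * t + ε₂ :=
  stmt_5_general I hI a ε₀ ε₁ ha hd hode
end

section
/- Let ε₀ > 0 and let a : I → ℝ be a differentiable function on an interval I with a(t) > ε₀ satisfying (a'(t)/a(t))·√(a(t)² − ε₀²) = ε₁ for a constant ε₁. Then there exists a constant ε₂ such that √(a(t)² − ε₀²) − ε₀·arcsec(a(t)/ε₀) = ε₁ t + ε₂ for all t ∈ I. -/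
/-!
The left-hand side is `G (a t)` for `G x = √(x² - ε₀²) - ε₀ arccos (ε₀ / x)`, an antiderivative
of `x ↦ √(x² - ε₀²) / x` on `(ε₀, ∞)`. By the chain rule and the ODE, `G ∘ a` has derivative `ε₁`
on `I`, so `G (a t) - ε₁ t` is constant on the convex set `I` by the mean value inequality.
-/

open Real

theorem Convex.exists_forall_eq_of_hasDerivWithinAt_zero {E : Type*} [NormedAddCommGroup E]
    [NormedSpace ℝ E] {s : Set ℝ} {f : ℝ → E} (hs : Convex ℝ s)
    (hf : ∀ x ∈ s, HasDerivWithinAt f 0 s x) : ∃ c, ∀ x ∈ s, f x = c := by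
  rcases s.eq_empty_or_nonempty with rfl | ⟨x₀, hx₀⟩
  · exact ⟨0, by simp⟩
  refine ⟨f x₀, fun x hx => ?_⟩
  have h := hs.norm_image_sub_le_of_norm_hasDerivWithin_le hf (C := 0) (by simp) hx₀ hx
  rwa [zero_mul, norm_le_zero_iff, sub_eq_zero] at h

theorem hasDerivAt_sqrt_sq_sub_sq_sub_mul_arccos_div {c x : ℝ} (hc : 0 < c) (hx : c < x) :
    HasDerivAt (fun y => √(y ^ 2 - c ^ 2) - c * arccos (c / y)) (√(x ^ 2 - c ^ 2) / x) x := by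
  have hx₀ : 0 < x := hc.trans hx
  have hpos : 0 < x ^ 2 - c ^ 2 := by nlinarith
  have hratio_pos : 0 < c / x := div_pos hc hx₀
  have hratio_lt : c / x < 1 := (div_lt_one hx₀).mpr hx
  have hsqrt_one_sub : √(1 - (c / x) ^ 2) = √(x ^ 2 - c ^ 2) / x := by
    rw [show 1 - (c / x) ^ 2 = (x ^ 2 - c ^ 2) / x ^ 2 by field_simp,
      sqrt_div hpos.le, sqrt_sq hx₀.le]
  have hroot : HasDerivAt (fun y => √(y ^ 2 - c ^ 2)) (2 * x / (2 * √(x ^ 2 - c ^ 2))) x := by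
    simpa using ((hasDerivAt_pow 2 x).sub_const (c ^ 2)).sqrt hpos.ne'
  have harccos := (hasDerivAt_arccos (by linarith) hratio_lt.ne).comp x
    ((hasDerivAt_inv hx₀.ne').const_mul c)
  rw [hsqrt_one_sub] at harccos
  refine (hroot.sub (harccos.const_mul c)).congr_deriv ?_
  field_simp
  exact (sq_sqrt hpos.le).symm

/-- Here `arcsec x = arccos (1/x)`, so `arcsec (a t / ε₀) = arccos (ε₀ / a t)`. -/
theorem stmt_6 (I : Set ℝ) (hI : Convex ℝ I) (a : ℝ → ℝ) (ε₀ ε₁ : ℝ)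
    (hε₀ : 0 < ε₀)
    (ha : ∀ t ∈ I, ε₀ < a t)
    (hd : ∀ t ∈ I, DifferentiableAt ℝ a t)
    (hode : ∀ t ∈ I, deriv a t / a t * Real.sqrt ((a t) ^ 2 - ε₀ ^ 2) = ε₁) :
    ∃ ε₂ : ℝ, ∀ t ∈ I,
      Real.sqrt ((a t) ^ 2 - ε₀ ^ 2)
        - ε₀ * Real.arccos (1 / (a t / ε₀)) = ε₁ * t + ε₂ := by
  have hderiv : ∀ t ∈ I, HasDerivWithinAt
      (fun t => √(a t ^ 2 - ε₀ ^ 2) - ε₀ * arccos (ε₀ / a t) - ε₁ * t) 0 I t := by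
    intro t ht
    have hcomp := (hasDerivAt_sqrt_sq_sub_sq_sub_mul_arccos_div hε₀ (ha t ht)).comp t
      (hd t ht).hasDerivAt
    have hzero : √(a t ^ 2 - ε₀ ^ 2) / a t * deriv a t - ε₁ = 0 := by
      rw [← hode t ht]
      ring
    rw [← hzero]
    have hlin : HasDerivAt (fun t => ε₁ * t) ε₁ t := by
      simpa using (hasDerivAt_id t).const_mul ε₁
    exact (hcomp.sub hlin).hasDerivWithinAt
  obtain ⟨c, hc⟩ := hI.exists_forall_eq_of_hasDerivWithinAt_zero hderiv
  refine ⟨c, fun t ht => ?_⟩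
  rw [one_div_div]
  linarith [hc t ht]
end
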